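/- Let Γ be a finite connected self-centered simple graph with vertex set V and base point v0 ∈ V, satisfying conditions (S1) and (S2). If the k-adjacency matrices of Γ mutually commute, i.e., A^(k) · A^(l) = A^(l) · A^(k) for all k, l ∈ I, then (Γ, v0) is hypergroup productive: p_{i,j}^k = p_{j,i}^k for all i,j,k ∈ I and Σ_{h∈I} p_{l,j}^h p_{i,h}^m = Σ_{h∈I} p_{i,l}^h p_{h,j}^m for all i,j,l,m ∈ I. -/

import Mathlib

open Finset

noncomputable section

/-- The sphere of radius `k` around `v`: all vertices at graph distance `k` from `v`. -/
def sph {V : Type*} [Fintype V] (G : SimpleGraph V) (k : ℕ) (v : V) : Finset V :=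
  Finset.univ.filter fun w => G.dist v w = k

/-- Eccentricity of a vertex. -/
def ecc {V : Type*} [Fintype V] (G : SimpleGraph V) (v : V) : ℕ :=
  Finset.univ.sup fun w => G.dist v w

/-- Diameter of the graph. -/
def gdiam {V : Type*} [Fintype V] (G : SimpleGraph V) : ℕ :=
  Finset.univ.sup fun v => ecc G v

/-- The `k`-adjacency matrix `A^(k)`. -/
def Adjk {V : Type*} [Fintype V] (G : SimpleGraph V) (k : ℕ) : Matrix V V ℝ :=
  Matrix.of fun x y => if G.dist x y = k then (1 : ℝ) else 0

/-- The normalized `k`-adjacency matrix `A_k = (1/μ_k) A^(k)`. -/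
def Anorm {V : Type*} [Fintype V] (G : SimpleGraph V) (v0 : V) (k : ℕ) : Matrix V V ℝ :=
  (((sph G k v0).card : ℝ))⁻¹ • Adjk G k

/-- The structure constant `p_{i,j}^k` of the random walk on `(Γ, v0)`. -/
def pcoef {V : Type*} [Fintype V] [DecidableEq V] (G : SimpleGraph V) (v0 : V)
    (i j k : ℕ) : ℝ :=
  (1 / ((sph G i v0).card : ℝ)) *
    ∑ v ∈ sph G i v0, ((sph G j v ∩ sph G k v0).card : ℝ) / ((sph G j v).card : ℝ)

/-- The matrix `D : I × V`, with `(i,v)`-entry `1` if `d(v0,v) = i` and `0` otherwise. -/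
def Dmat {V : Type*} [Fintype V] (G : SimpleGraph V) (v0 : V) :
    Matrix (Fin (gdiam G + 1)) V ℝ :=
  Matrix.of fun i v => if G.dist v0 v = (i : ℕ) then (1 : ℝ) else 0

/-- The `k`-transition matrix `P_k`, with `(i,j)`-entry `p_{k,j}^i`. -/
def Pmat {V : Type*} [Fintype V] [DecidableEq V] (G : SimpleGraph V) (v0 : V) (k : ℕ) :
    Matrix (Fin (gdiam G + 1)) (Fin (gdiam G + 1)) ℝ :=
  Matrix.of fun i j => pcoef G v0 k (j : ℕ) (i : ℕ)

set_option linter.unusedSectionVars false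
section AuxHG
variable {V : Type*} [Fintype V] [DecidableEq V] (G : SimpleGraph V) (v0 : V)

lemma mem_sph {k : ℕ} {v w : V} : w ∈ sph G k v ↔ G.dist v w = k := by
  simp [sph]

lemma dist_le_gdiam (hsc : ∀ v : V, ecc G v = gdiam G) (z : V) :
    G.dist v0 z ≤ gdiam G := by
  have : G.dist v0 z ≤ ecc G v0 := Finset.le_sup (f := fun w => G.dist v0 w) (Finset.mem_univ z)
  simpa [hsc v0] using this

lemma exists_dist_eq_aux (hconn : G.Connected) :
    ∀ n, ∀ w : V, G.dist v0 w = n → ∀ k ≤ n, ∃ u, G.dist v0 u = k := by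
  intro n
  induction n with
  | zero =>
    intro w _ k hk
    exact ⟨v0, by simpa [Nat.le_zero.mp hk] using G.dist_self (v := v0)⟩
  | succ n ih =>
    intro w hw k hk
    rcases Nat.lt_or_ge k (n + 1) with h | h
    · obtain ⟨p, hp⟩ := (hconn w v0).exists_walk_length_eq_dist
      have hlen : p.length = n + 1 := by rw [hp, SimpleGraph.dist_comm, hw]
      cases p with
      | nil => simp at hlen
      | @cons _ b _ hadj q =>
        have hq : q.length = n := by simpa using hlen
        have h1 : G.dist b v0 ≤ n := hq ▸ SimpleGraph.dist_le q
        have h2 : G.dist w v0 ≤ G.dist w b + G.dist b v0 := hconn.dist_triangle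
        have h3 : G.dist w b ≤ 1 := by simpa using SimpleGraph.dist_le hadj.toWalk
        have h5 : G.dist w v0 = n + 1 := by rw [SimpleGraph.dist_comm, hw]
        have : G.dist v0 b = n := by rw [SimpleGraph.dist_comm]; omega
        exact ih b this k (Nat.lt_succ_iff.mp h)
    · exact ⟨w, by omega⟩

lemma sph_nonempty (hconn : G.Connected) (hsc : ∀ v : V, ecc G v = gdiam G)
    {k : ℕ} (hk : k ≤ gdiam G) : (sph G k v0).Nonempty := by
  have hne : Nonempty V := hconn.nonempty
  obtain ⟨w, -, hw⟩ := Finset.exists_mem_eq_sup Finset.univ Finset.univ_nonempty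
    (fun w => G.dist v0 w)
  have hdist : G.dist v0 w = gdiam G := by
    rw [← hw]; exact (hsc v0).symm ▸ rfl
  obtain ⟨u, hu⟩ := exists_dist_eq_aux G v0 hconn (gdiam G) w hdist k hk
  exact ⟨u, (mem_sph G).mpr hu⟩

set_option linter.unusedSectionVars false

/-- the central count -/
def Ncnt (i j k : ℕ) : ℝ := ∑ x ∈ sph G i v0, ∑ y ∈ sph G k v0, Adjk G j x y

lemma card_inter_eq (j k : ℕ) (x : V) :
    ((sph G j x ∩ sph G k v0).card : ℝ) = ∑ y ∈ sph G k v0, Adjk G j x y := by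
  have hset : sph G j x ∩ sph G k v0 = (sph G k v0).filter (fun y => G.dist x y = j) := by
    ext y; simp [sph, and_comm]
  rw [hset, Finset.card_filter]
  push_cast
  refine Finset.sum_congr rfl fun y _ => ?_
  simp [Adjk]

lemma Ncnt_card (i j k : ℕ) :
    Ncnt G v0 i j k = ∑ x ∈ sph G i v0, ((sph G j x ∩ sph G k v0).card : ℝ) := by
  unfold Ncnt
  exact Finset.sum_congr rfl fun x _ => (card_inter_eq G v0 j k x).symm

lemma sum_sph_eq (i : ℕ) (f : V → ℝ) :
    ∑ x ∈ sph G i v0, f x = ∑ x, Adjk G i v0 x * f x := by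
  rw [show sph G i v0 = Finset.univ.filter (fun x => G.dist v0 x = i) from rfl,
    Finset.sum_filter]
  refine Finset.sum_congr rfl fun x _ => ?_
  by_cases h : G.dist v0 x = i <;> simp [Adjk, h]

lemma Ncnt_eq_mul (i j k : ℕ) :
    Ncnt G v0 i j k = ∑ y ∈ sph G k v0, (Adjk G i * Adjk G j) v0 y := by
  unfold Ncnt
  refine Finset.sum_comm.trans ?_
  refine Finset.sum_congr rfl fun y _ => ?_
  rw [Matrix.mul_apply, ← sum_sph_eq]

lemma Ncnt_swap (i j k : ℕ) : Ncnt G v0 i j k = Ncnt G v0 k j i := by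
  unfold Ncnt
  refine Finset.sum_comm.trans ?_
  refine Finset.sum_congr rfl fun y _ => Finset.sum_congr rfl fun x _ => ?_
  simp only [Adjk, Matrix.of_apply]
  rw [SimpleGraph.dist_comm]

lemma pcoef_eq (i j k : ℕ)
    (h1 : ∀ v : V, (sph G j v).card = (sph G j v0).card) :
    pcoef G v0 i j k =
      Ncnt G v0 i j k / (((sph G i v0).card : ℝ) * ((sph G j v0).card : ℝ)) := by
  unfold pcoef
  rw [Ncnt_card]
  rw [show (∑ v ∈ sph G i v0, ((sph G j v ∩ sph G k v0).card : ℝ) / ((sph G j v).card : ℝ))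
      = (∑ v ∈ sph G i v0, ((sph G j v ∩ sph G k v0).card : ℝ)) / ((sph G j v0).card : ℝ) by
    rw [Finset.sum_div]
    exact Finset.sum_congr rfl fun v _ => by rw [h1 v]]
  rw [one_div_mul_eq_div, div_div, mul_comm]

lemma Ncnt_comm (i j k : ℕ) (h : Adjk G i * Adjk G j = Adjk G j * Adjk G i) :
    Ncnt G v0 i j k = Ncnt G v0 j i k := by
  rw [Ncnt_eq_mul, Ncnt_eq_mul, h]

lemma Ncnt_S2
    (hS2 : ∀ i j k : ℕ, i ≤ gdiam G → j ≤ gdiam G → k ≤ gdiam G →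
      ∀ v ∈ sph G k v0, ∀ w ∈ sph G k v0,
        (sph G i v ∩ sph G j v0).card = (sph G i w ∩ sph G j v0).card)
    {h c d : ℕ} (hh : h ≤ gdiam G) (hc : c ≤ gdiam G) (hd : d ≤ gdiam G)
    {z : V} (hz : z ∈ sph G h v0) :
    Ncnt G v0 h c d = ((sph G h v0).card : ℝ) * ((sph G c z ∩ sph G d v0).card : ℝ) := by
  rw [Ncnt_card]
  rw [show (∑ x ∈ sph G h v0, ((sph G c x ∩ sph G d v0).card : ℝ))
      = ∑ _x ∈ sph G h v0, ((sph G c z ∩ sph G d v0).card : ℝ) from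
    Finset.sum_congr rfl fun x hx => by exact_mod_cast hS2 c d h hc hd hh x hx z hz]
  rw [Finset.sum_const, nsmul_eq_mul]

lemma crux_term
    (hconn : G.Connected) (hsc : ∀ v : V, ecc G v = gdiam G)
    (hS2 : ∀ i j k : ℕ, i ≤ gdiam G → j ≤ gdiam G → k ≤ gdiam G →
      ∀ v ∈ sph G k v0, ∀ w ∈ sph G k v0,
        (sph G i v ∩ sph G j v0).card = (sph G i w ∩ sph G j v0).card)
    {a b c m h : ℕ} (hcm : Adjk G c * Adjk G h = Adjk G h * Adjk G c)
    (hh : h ≤ gdiam G) (hc : c ≤ gdiam G) (hm : m ≤ gdiam G) :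
    Ncnt G v0 a b h * Ncnt G v0 c h m / ((sph G h v0).card : ℝ) =
      ∑ z ∈ sph G h v0, ∑ x ∈ sph G a v0, ∑ y ∈ sph G m v0,
        Adjk G b x z * Adjk G c z y := by
  obtain ⟨z0, hz0⟩ := sph_nonempty G v0 hconn hsc hh
  have hcard : ((sph G h v0).card : ℝ) ≠ 0 := by
    exact_mod_cast Finset.card_pos.mpr ⟨z0, hz0⟩ |>.ne'
  have h1 : Ncnt G v0 c h m = ((sph G h v0).card : ℝ) *
      ((sph G c z0 ∩ sph G m v0).card : ℝ) := by
    rw [Ncnt_comm G v0 c h m hcm]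
    exact Ncnt_S2 G v0 hS2 hh hc hm hz0
  rw [h1, mul_div_assoc, mul_div_cancel_left₀ _ hcard]
  have h2 : ∀ z ∈ sph G h v0,
      ((sph G c z0 ∩ sph G m v0).card : ℝ) = ∑ y ∈ sph G m v0, Adjk G c z y := by
    intro z hz
    rw [← card_inter_eq]
    exact_mod_cast hS2 c m h hc hm hh z0 hz0 z hz
  calc Ncnt G v0 a b h * ((sph G c z0 ∩ sph G m v0).card : ℝ)
      = (∑ z ∈ sph G h v0, ∑ x ∈ sph G a v0, Adjk G b x z) *
          ((sph G c z0 ∩ sph G m v0).card : ℝ) := by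
        rw [show Ncnt G v0 a b h = ∑ z ∈ sph G h v0, ∑ x ∈ sph G a v0, Adjk G b x z from
          Finset.sum_comm]
    _ = ∑ z ∈ sph G h v0, ∑ x ∈ sph G a v0,
          Adjk G b x z * ((sph G c z0 ∩ sph G m v0).card : ℝ) := by
        rw [Finset.sum_mul]
        exact Finset.sum_congr rfl fun z _ => Finset.sum_mul ..
    _ = ∑ z ∈ sph G h v0, ∑ x ∈ sph G a v0, ∑ y ∈ sph G m v0,
          Adjk G b x z * Adjk G c z y := by
        refine Finset.sum_congr rfl fun z hz => Finset.sum_congr rfl fun x _ => ?_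
        rw [h2 z hz, Finset.mul_sum]

lemma crux
    (hconn : G.Connected) (hsc : ∀ v : V, ecc G v = gdiam G)
    (hS2 : ∀ i j k : ℕ, i ≤ gdiam G → j ≤ gdiam G → k ≤ gdiam G →
      ∀ v ∈ sph G k v0, ∀ w ∈ sph G k v0,
        (sph G i v ∩ sph G j v0).card = (sph G i w ∩ sph G j v0).card)
    (hcommA : ∀ k l : ℕ, k ≤ gdiam G → l ≤ gdiam G →
      Adjk G k * Adjk G l = Adjk G l * Adjk G k)
    {a b c m : ℕ} (hc : c ≤ gdiam G) (hm : m ≤ gdiam G) :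
    ∑ h ∈ Finset.range (gdiam G + 1),
        Ncnt G v0 a b h * Ncnt G v0 c h m / ((sph G h v0).card : ℝ) =
      ∑ y ∈ sph G m v0, (Adjk G a * Adjk G b * Adjk G c) v0 y := by
  have step1 : ∑ h ∈ Finset.range (gdiam G + 1),
      Ncnt G v0 a b h * Ncnt G v0 c h m / ((sph G h v0).card : ℝ) =
      ∑ h ∈ Finset.range (gdiam G + 1), ∑ z ∈ sph G h v0,
        ∑ x ∈ sph G a v0, ∑ y ∈ sph G m v0, Adjk G b x z * Adjk G c z y := by
    refine Finset.sum_congr rfl fun h hh => ?_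
    have hh' : h ≤ gdiam G := Nat.lt_succ_iff.mp (Finset.mem_range.mp hh)
    exact crux_term G v0 hconn hsc hS2 (hcommA c h hc hh') hh' hc hm
  rw [step1]
  have step2 : ∑ h ∈ Finset.range (gdiam G + 1), ∑ z ∈ sph G h v0,
        ∑ x ∈ sph G a v0, ∑ y ∈ sph G m v0, Adjk G b x z * Adjk G c z y =
      ∑ z : V, ∑ x ∈ sph G a v0, ∑ y ∈ sph G m v0, Adjk G b x z * Adjk G c z y := by
    exact Finset.sum_fiberwise_of_maps_to (g := fun z => G.dist v0 z)
      (fun z _ => Finset.mem_range.mpr (Nat.lt_succ_of_le (dist_le_gdiam G v0 hsc z))) _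
  rw [step2]
  have inner : ∀ z : V, (∑ x ∈ sph G a v0, ∑ y ∈ sph G m v0, Adjk G b x z * Adjk G c z y)
      = ∑ y ∈ sph G m v0, (Adjk G a * Adjk G b) v0 z * Adjk G c z y := by
    intro z
    rw [Finset.sum_comm]
    refine Finset.sum_congr rfl fun y _ => ?_
    rw [← Finset.sum_mul, sum_sph_eq, Matrix.mul_apply]
  rw [Finset.sum_congr rfl fun z _ => inner z, Finset.sum_comm]
  refine Finset.sum_congr rfl fun y _ => ?_
  rw [Matrix.mul_apply]

end AuxHG

theorem stmt11 {V : Type*} [Fintype V] [DecidableEq V] (G : SimpleGraph V)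
    (hconn : G.Connected) (v0 : V)
    (hsc : ∀ v : V, ecc G v = gdiam G)
    (hS1 : ∀ i : ℕ, i ≤ gdiam G → ∀ v w : V, (sph G i v).card = (sph G i w).card)
    (hS2 : ∀ i j k : ℕ, i ≤ gdiam G → j ≤ gdiam G → k ≤ gdiam G →
      ∀ v ∈ sph G k v0, ∀ w ∈ sph G k v0,
        (sph G i v ∩ sph G j v0).card = (sph G i w ∩ sph G j v0).card)
    (hcommA : ∀ k l : ℕ, k ≤ gdiam G → l ≤ gdiam G →
      Adjk G k * Adjk G l = Adjk G l * Adjk G k) :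
    (∀ i j k : ℕ, i ≤ gdiam G → j ≤ gdiam G → k ≤ gdiam G →
        pcoef G v0 i j k = pcoef G v0 j i k) ∧
      (∀ i j l m : ℕ, i ≤ gdiam G → j ≤ gdiam G → l ≤ gdiam G → m ≤ gdiam G →
        ∑ h ∈ Finset.range (gdiam G + 1), pcoef G v0 l j h * pcoef G v0 i h m =
          ∑ h ∈ Finset.range (gdiam G + 1), pcoef G v0 i l h * pcoef G v0 h j m) := by
  have μne : ∀ t : ℕ, t ≤ gdiam G → ((sph G t v0).card : ℝ) ≠ 0 := fun t ht => by
    exact_mod_cast (Finset.card_pos.mpr (sph_nonempty G v0 hconn hsc ht)).ne'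
  constructor
  · intro i j k hi hj hk
    rw [pcoef_eq G v0 i j k (fun v => hS1 j hj v v0),
      pcoef_eq G v0 j i k (fun v => hS1 i hi v v0),
      Ncnt_comm G v0 i j k (hcommA i j hi hj), mul_comm ((sph G i v0).card : ℝ)]
  · intro i j l m hi hj hl hm
    have hLHS : ∑ h ∈ Finset.range (gdiam G + 1), pcoef G v0 l j h * pcoef G v0 i h m =
        (∑ y ∈ sph G m v0, (Adjk G l * Adjk G j * Adjk G i) v0 y) *
          (((sph G l v0).card : ℝ) * ((sph G j v0).card : ℝ) * ((sph G i v0).card : ℝ))⁻¹ := by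
      rw [← crux G v0 hconn hsc hS2 hcommA hi hm (a := l) (b := j), Finset.sum_mul]
      refine Finset.sum_congr rfl fun h hh => ?_
      have hh' : h ≤ gdiam G := Nat.lt_succ_iff.mp (Finset.mem_range.mp hh)
      rw [pcoef_eq G v0 l j h (fun v => hS1 j hj v v0),
        pcoef_eq G v0 i h m (fun v => hS1 h hh' v v0)]
      have n1 := μne l hl; have n2 := μne j hj; have n3 := μne i hi; have n4 := μne h hh'
      field_simp
    have hRHS : ∑ h ∈ Finset.range (gdiam G + 1), pcoef G v0 i l h * pcoef G v0 h j m =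
        (∑ y ∈ sph G m v0, (Adjk G i * Adjk G l * Adjk G j) v0 y) *
          (((sph G i v0).card : ℝ) * ((sph G l v0).card : ℝ) * ((sph G j v0).card : ℝ))⁻¹ := by
      rw [← crux G v0 hconn hsc hS2 hcommA hj hm (a := i) (b := l), Finset.sum_mul]
      refine Finset.sum_congr rfl fun h hh => ?_
      have hh' : h ≤ gdiam G := Nat.lt_succ_iff.mp (Finset.mem_range.mp hh)
      rw [pcoef_eq G v0 i l h (fun v => hS1 l hl v v0),
        pcoef_eq G v0 h j m (fun v => hS1 j hj v v0),
        Ncnt_comm G v0 h j m (hcommA h j hh' hj)]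
      have n1 := μne l hl; have n2 := μne j hj; have n3 := μne i hi; have n4 := μne h hh'
      field_simp
    rw [hLHS, hRHS]
    have hM : Adjk G l * Adjk G j * Adjk G i = Adjk G i * Adjk G l * Adjk G j := by
      calc Adjk G l * Adjk G j * Adjk G i
          = Adjk G j * Adjk G l * Adjk G i := by rw [hcommA l j hl hj]
        _ = Adjk G j * (Adjk G l * Adjk G i) := by rw [mul_assoc]
        _ = Adjk G j * (Adjk G i * Adjk G l) := by rw [hcommA l i hl hi]
        _ = Adjk G j * Adjk G i * Adjk G l := by rw [mul_assoc]
        _ = Adjk G i * Adjk G j * Adjk G l := by rw [hcommA j i hj hi]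
        _ = Adjk G i * (Adjk G j * Adjk G l) := by rw [mul_assoc]
        _ = Adjk G i * (Adjk G l * Adjk G j) := by rw [hcommA j l hj hl]
        _ = Adjk G i * Adjk G l * Adjk G j := by rw [mul_assoc]
    rw [hM]
    ring

end
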